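/- arXiv:1007.4319 — 2 statements merged into one kernel-verified Lean document; each statement's English description precedes it below -/
import Mathlib

section
/- Let X, Y, Z be Banach spaces with X compactly embedded into Z, and let L : X → Y be a bounded linear operator. If there exists C such that ‖u‖_X ≤ C(‖L u‖_Y + ‖u‖_Z) for all u ∈ X, then the kernel of L is finite-dimensional and the range of L is closed in Y. -/
/-!
The estimate makes `u ↦ (L u, J u)` antilipschitz. Hence a bounded sequence `uₙ` with `L uₙ`
convergent has a convergent subsequence: any subsequence on which `J uₙ` converges, which exists
since `J` is compact, is Cauchy. This sequential property alone makes the unit ball of `ker L`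
compact, and, arguing by contradiction, gives a bound `‖w‖ ≤ K ‖L w‖` on a closed complement `W`
of the finite-dimensional kernel. So `L` is antilipschitz on the complete space `W`, whose image is
all of `range L`.
-/

open Filter Topology Metric NNReal

section Estimate

variable {X Y Z : Type*} [NormedAddCommGroup X] [NormedSpace ℝ X]
  [NormedAddCommGroup Y] [NormedSpace ℝ Y] [NormedAddCommGroup Z] [NormedSpace ℝ Z]

theorem ContinuousLinearMap.antilipschitz_prod_of_norm_le (L : X →L[ℝ] Y) (J : X →L[ℝ] Z)
    (C : ℝ) (hC : ∀ u : X, ‖u‖ ≤ C * (‖L u‖ + ‖J u‖)) :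
    AntilipschitzWith (2 * C).toNNReal (L.prod J) := by
  refine (L.prod J).antilipschitz_of_bound fun u => ?_
  have hL : ‖L u‖ ≤ ‖(L.prod J) u‖ := _root_.norm_fst_le ((L.prod J) u)
  have hJ : ‖J u‖ ≤ ‖(L.prod J) u‖ := _root_.norm_snd_le ((L.prod J) u)
  rw [Real.coe_toNNReal']
  rcases le_total 0 C with hC₀ | hC₀
  · nlinarith [hC u, mul_le_mul_of_nonneg_left (add_le_add hL hJ) hC₀,
      mul_le_mul_of_nonneg_right (le_max_left (2 * C) 0) (norm_nonneg ((L.prod J) u))]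
  · nlinarith [hC u, mul_nonneg (le_max_right (2 * C) 0) (norm_nonneg ((L.prod J) u)),
      mul_nonneg (neg_nonneg.2 hC₀) (add_nonneg (norm_nonneg (L u)) (norm_nonneg (J u)))]

theorem exists_subseq_tendsto_of_norm_le [CompleteSpace X] (J : X →L[ℝ] Z)
    (hJ : IsCompactOperator J) (L : X →L[ℝ] Y) (C : ℝ)
    (hC : ∀ u : X, ‖u‖ ≤ C * (‖L u‖ + ‖J u‖)) (x : ℕ → X) (M : ℝ) (y : Y)
    (hxM : ∀ n, ‖x n‖ ≤ M) (hLx : Tendsto (L ∘ x) atTop (𝓝 y)) :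
    ∃ a, ∃ φ : ℕ → ℕ, StrictMono φ ∧ Tendsto (x ∘ φ) atTop (𝓝 a) := by
  have hJx : ∀ n, J (x n) ∈ closure (J '' closedBall 0 M) := fun n =>
    subset_closure ⟨x n, mem_closedBall_zero_iff.2 (hxM n), rfl⟩
  obtain ⟨_, _, φ, hφ, hJxφ⟩ :=
    (hJ.isCompact_closure_image_closedBall (f := (J : X →ₗ[ℝ] Z)) M).tendsto_subseq hJx
  have hprod : CauchySeq (L.prod J ∘ x ∘ φ) :=
    ((hLx.comp hφ.tendsto_atTop).cauchySeq).prodMk hJxφ.cauchySeq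
  have hxφ : CauchySeq (x ∘ φ) :=
    ((L.antilipschitz_prod_of_norm_le J C hC).isUniformInducing
      (L.prod J).uniformContinuous).cauchy_map_iff.1 (by simpa [CauchySeq, map_map] using hprod)
  obtain ⟨a, ha⟩ := cauchySeq_tendsto_of_complete hxφ
  exact ⟨a, φ, hφ, ha⟩

end Estimate

section SubseqProperty

variable {X Y : Type*} [NormedAddCommGroup X] [NormedSpace ℝ X]
  [NormedAddCommGroup Y] [NormedSpace ℝ Y] {T : X →L[ℝ] Y}
  (hT : ∀ (x : ℕ → X) (M : ℝ) (y : Y), (∀ n, ‖x n‖ ≤ M) → Tendsto (T ∘ x) atTop (𝓝 y) →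
    ∃ a, ∃ φ : ℕ → ℕ, StrictMono φ ∧ Tendsto (x ∘ φ) atTop (𝓝 a))
include hT

theorem ContinuousLinearMap.finiteDimensional_ker_of_exists_subseq_tendsto :
    FiniteDimensional ℝ (LinearMap.ker (T : X →ₗ[ℝ] Y)) := by
  refine FiniteDimensional.of_isCompact_closedBall₀ ℝ one_pos
    (isCompact_iff_isSeqCompact.2 fun x hx => ?_)
  have hx₁ : ∀ n, ‖(x n : X)‖ ≤ 1 := fun n => mem_closedBall_zero_iff.1 (hx n)
  have hTx : Tendsto (T ∘ fun n => (x n : X)) atTop (𝓝 0) :=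
    tendsto_const_nhds.congr fun n => (x n).2.symm
  obtain ⟨a, φ, hφ, hxa⟩ := hT _ 1 0 hx₁ hTx
  have ha : a ∈ LinearMap.ker (T : X →ₗ[ℝ] Y) :=
    T.isClosed_ker.mem_of_tendsto hxa (Eventually.of_forall fun n => (x (φ n)).2)
  have hxa' : Tendsto (x ∘ φ) atTop (𝓝 ⟨a, ha⟩) := tendsto_subtype_rng.2 hxa
  exact ⟨⟨a, ha⟩, isClosed_closedBall.mem_of_tendsto hxa' (Eventually.of_forall fun n => hx (φ n)),
    φ, hφ, hxa'⟩

theorem ContinuousLinearMap.exists_norm_le_of_exists_subseq_tendsto {W : Submodule ℝ X}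
    (hW : IsClosed (W : Set X)) (hWT : Disjoint W (LinearMap.ker (T : X →ₗ[ℝ] Y))) :
    ∃ K : ℝ≥0, ∀ w ∈ W, ‖w‖ ≤ K * ‖T w‖ := by
  by_contra! hbad
  choose w hwW hw using fun n : ℕ => hbad (n + 1)
  have hw₀ : ∀ n, w n ≠ 0 := fun n h => by simpa [h] using hw n
  set v : ℕ → X := fun n => ‖w n‖⁻¹ • w n
  have hv₁ : ∀ n, ‖v n‖ = 1 := fun n => norm_smul_inv_norm (hw₀ n)
  have hTv : ∀ n, ‖T (v n)‖ ≤ 1 / ((n : ℝ) + 1) := fun n => by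
    have := hw n
    push_cast at this
    rw [map_smul, norm_smul, norm_inv, norm_norm, inv_mul_le_iff₀ (norm_pos_iff.2 (hw₀ n)),
      mul_one_div, le_div_iff₀ (by positivity)]
    linarith
  have hTv₀ : Tendsto (T ∘ v) atTop (𝓝 0) :=
    squeeze_zero_norm hTv tendsto_one_div_add_atTop_nhds_zero_nat
  obtain ⟨a, φ, hφ, hva⟩ := hT v 1 0 (fun n => (hv₁ n).le) hTv₀
  have haW : a ∈ W := hW.mem_of_tendsto hva (Eventually.of_forall fun n => W.smul_mem _ (hwW _))
  have hTa : T a = 0 :=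
    tendsto_nhds_unique ((T.continuous.tendsto a).comp hva) (hTv₀.comp hφ.tendsto_atTop)
  have ha₁ : ‖a‖ = 1 := tendsto_nhds_unique hva.norm (by simp [hv₁])
  have ha₀ : a = 0 := (Submodule.disjoint_def.1 hWT) a haW hTa
  simp [ha₀] at ha₁

theorem ContinuousLinearMap.isClosed_range_of_exists_subseq_tendsto [CompleteSpace X] :
    IsClosed (Set.range T) := by
  have := T.finiteDimensional_ker_of_exists_subseq_tendsto hT
  obtain ⟨W, hW, hWT⟩ := (Submodule.ClosedComplemented.of_finiteDimensional
    (LinearMap.ker (T : X →ₗ[ℝ] Y))).exists_isClosed_isCompl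
  obtain ⟨K, hK⟩ := T.exists_norm_le_of_exists_subseq_tendsto hT hW hWT.symm.disjoint
  have : CompleteSpace W := hW.completeSpace_coe
  have hrange : Set.range (T.comp W.subtypeL) = Set.range T := by
    rw [ContinuousLinearMap.coe_comp]
    refine (Set.range_comp_subset_range _ _).antisymm ?_
    rintro _ ⟨x, rfl⟩
    obtain ⟨k, hk, w, hw, rfl⟩ := Submodule.mem_sup.1 (hWT.sup_eq_top ▸ Submodule.mem_top (x := x))
    have hTk : T k = 0 := hk
    exact ⟨⟨w, hw⟩, by simp [hTk]⟩
  rw [← hrange]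
  exact ((T.comp W.subtypeL).antilipschitz_of_bound fun w => hK w w.2).isClosed_range
    (T.comp W.subtypeL).uniformContinuous

end SubseqProperty

theorem peetre_lemma_forward_general
    {X Y Z : Type*} [NormedAddCommGroup X] [NormedSpace ℝ X] [CompleteSpace X]
    [NormedAddCommGroup Y] [NormedSpace ℝ Y]
    [NormedAddCommGroup Z] [NormedSpace ℝ Z]
    (J : X →L[ℝ] Z) (hJcpt : IsCompactOperator J)
    (L : X →L[ℝ] Y) (C : ℝ)
    (hC : ∀ u : X, ‖u‖ ≤ C * (‖L u‖ + ‖J u‖)) :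
    FiniteDimensional ℝ (LinearMap.ker (L : X →ₗ[ℝ] Y)) ∧ IsClosed (Set.range L) :=
  have hL := exists_subseq_tendsto_of_norm_le J hJcpt L C hC
  ⟨L.finiteDimensional_ker_of_exists_subseq_tendsto hL,
    L.isClosed_range_of_exists_subseq_tendsto hL⟩

/-- Peetre's lemma (forward direction): if `X` is compactly embedded into `Z` via `J`,
`L : X → Y` is bounded linear, and the a priori estimate
`‖u‖_X ≤ C(‖L u‖_Y + ‖J u‖_Z)` holds, then `ker L` is finite-dimensional and
`range L` is closed. -/
theorem peetre_lemma_forward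
    {X Y Z : Type*} [NormedAddCommGroup X] [NormedSpace ℝ X] [CompleteSpace X]
    [NormedAddCommGroup Y] [NormedSpace ℝ Y] [CompleteSpace Y]
    [NormedAddCommGroup Z] [NormedSpace ℝ Z] [CompleteSpace Z]
    (J : X →L[ℝ] Z) (hJinj : Function.Injective J) (hJcpt : IsCompactOperator J)
    (L : X →L[ℝ] Y) (C : ℝ)
    (hC : ∀ u : X, ‖u‖ ≤ C * (‖L u‖ + ‖J u‖)) :
    FiniteDimensional ℝ (LinearMap.ker (L : X →ₗ[ℝ] Y)) ∧ IsClosed (Set.range L) :=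
  peetre_lemma_forward_general J hJcpt L C hC
end

section
/- Let X, Y, Z be Banach spaces with X compactly embedded into Z, and let L : X → Y be a bounded linear operator. If the kernel of L is finite-dimensional and the range of L is closed in Y, then there exists a constant C such that ‖u‖_X ≤ C(‖L u‖_Y + ‖u‖_Z) for all u ∈ X. -/
/-!
By the open mapping theorem applied to `L` corestricted to its (closed, hence complete) range,
every `u` can be written as `v + k` with `‖v‖ ≤ C ‖L u‖` and `k ∈ ker L`. On the
finite-dimensional kernel the injective map `J` is bounded below, so
`‖k‖ ≤ K ‖J k‖ ≤ K (‖J u‖ + ‖J‖ ‖v‖)`.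
-/

open NNReal

section

variable {𝕜 E F : Type*} [NontriviallyNormedField 𝕜]
  [NormedAddCommGroup E] [NormedSpace 𝕜 E] [NormedAddCommGroup F] [NormedSpace 𝕜 F]

theorem ContinuousLinearMap.exists_preimage_norm_le_of_isClosed_range
    [CompleteSpace E] [CompleteSpace F] (f : E →L[𝕜] F) (hf : IsClosed (Set.range f)) :
    ∃ C > 0, ∀ x, ∃ x', f x' = f x ∧ ‖x'‖ ≤ C * ‖f x‖ := by
  have : CompleteSpace f.range := hf.completeSpace_coe
  obtain ⟨C, hC, hpre⟩ := f.rangeRestrict.exists_preimage_norm_le f.surjective_rangeRestrict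
  refine ⟨C, hC, fun x => ?_⟩
  obtain ⟨x', hx', hnorm⟩ := hpre (f.rangeRestrict x)
  exact ⟨x', congrArg Subtype.val hx', hnorm⟩

theorem Submodule.exists_norm_le_mul_norm_of_injOn [CompleteSpace 𝕜] (S : Submodule 𝕜 E)
    [FiniteDimensional 𝕜 S] (J : E →L[𝕜] F) (hJ : Set.InjOn J S) :
    ∃ K : ℝ≥0, ∀ x ∈ S, ‖x‖ ≤ K * ‖J x‖ := by
  have hker : LinearMap.ker (J ∘L S.subtypeL : S →ₗ[𝕜] F) = ⊥ :=
    LinearMap.ker_eq_bot.mpr fun a b hab => Subtype.ext (hJ a.2 b.2 hab)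
  obtain ⟨K, -, hK⟩ := LinearMap.exists_antilipschitzWith _ hker
  exact ⟨K, fun x hx => ContinuousLinearMap.bound_of_antilipschitz _ hK ⟨x, hx⟩⟩

end

theorem peetre_lemma_converse_general
    {X Y Z : Type*} [NormedAddCommGroup X] [NormedSpace ℝ X] [CompleteSpace X]
    [NormedAddCommGroup Y] [NormedSpace ℝ Y] [CompleteSpace Y]
    [NormedAddCommGroup Z] [NormedSpace ℝ Z]
    (J : X →L[ℝ] Z) (hJinj : Function.Injective J)
    (L : X →L[ℝ] Y)
    (hker : FiniteDimensional ℝ (LinearMap.ker (L : X →ₗ[ℝ] Y)))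
    (hrange : IsClosed (Set.range L)) :
    ∃ C : ℝ, ∀ u : X, ‖u‖ ≤ C * (‖L u‖ + ‖J u‖) := by
  obtain ⟨C, hC, hpre⟩ := L.exists_preimage_norm_le_of_isClosed_range hrange
  obtain ⟨K, hK⟩ := (LinearMap.ker (L : X →ₗ[ℝ] Y)).exists_norm_le_mul_norm_of_injOn J
    hJinj.injOn
  refine ⟨C + K + K * ‖J‖ * C, fun u => ?_⟩
  obtain ⟨v, hLv, hv⟩ := hpre u
  have hk : u - v ∈ LinearMap.ker (L : X →ₗ[ℝ] Y) := by
    simp only [LinearMap.mem_ker, ContinuousLinearMap.coe_coe, map_sub, hLv, sub_self]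
  have hJk : ‖J (u - v)‖ ≤ ‖J u‖ + ‖J‖ * (C * ‖L u‖) := calc
    ‖J (u - v)‖ ≤ ‖J u‖ + ‖J v‖ := by rw [map_sub]; exact norm_sub_le _ _
    _ ≤ ‖J u‖ + ‖J‖ * (C * ‖L u‖) := by grw [J.le_opNorm v, hv]
  calc ‖u‖ = ‖v + (u - v)‖ := by rw [add_sub_cancel]
    _ ≤ C * ‖L u‖ + K * (‖J u‖ + ‖J‖ * (C * ‖L u‖)) := by
      grw [norm_add_le, hv, hK _ hk, hJk]
    _ ≤ (C + K + K * ‖J‖ * C) * (‖L u‖ + ‖J u‖) := by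
      have := mul_nonneg (mul_nonneg K.coe_nonneg (norm_nonneg J)) hC.le
      nlinarith [norm_nonneg (L u), norm_nonneg (J u), K.coe_nonneg]

/-- Peetre's lemma (converse direction): if `ker L` is finite-dimensional and
`range L` is closed, then the a priori estimate
`‖u‖_X ≤ C(‖L u‖_Y + ‖J u‖_Z)` holds for some constant `C`, where `J` is the
compact embedding of `X` into `Z`. -/
theorem peetre_lemma_converse
    {X Y Z : Type*} [NormedAddCommGroup X] [NormedSpace ℝ X] [CompleteSpace X]
    [NormedAddCommGroup Y] [NormedSpace ℝ Y] [CompleteSpace Y]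
    [NormedAddCommGroup Z] [NormedSpace ℝ Z] [CompleteSpace Z]
    (J : X →L[ℝ] Z) (hJinj : Function.Injective J) (hJcpt : IsCompactOperator J)
    (L : X →L[ℝ] Y)
    (hker : FiniteDimensional ℝ (LinearMap.ker (L : X →ₗ[ℝ] Y)))
    (hrange : IsClosed (Set.range L)) :
    ∃ C : ℝ, ∀ u : X, ‖u‖ ≤ C * (‖L u‖ + ‖J u‖) :=
  peetre_lemma_converse_general J hJinj L hker hrange
end
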